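/- For every integer n ≥ 1: Σ_{l=0}^{2n} (−1)^{l+1} binom(2n, l) |l − n| = 2 (−1)^{n} binom(2(n−1), n−1). -/
import Mathlib

lemma lemA (N m : ℕ) :
    ∑ i ∈ Finset.range (m+1), (-1:ℝ)^i * ((N+1).choose i : ℝ)
      = (-1)^m * (N.choose m : ℝ) := by
  induction m with
  | zero => simp
  | succ m ih =>
    rw [Finset.sum_range_succ, ih, Nat.choose_succ_succ]
    push_cast
    ring

lemma lemB (N m : ℕ) :
    ∑ i ∈ Finset.range (m+2), (-1:ℝ)^i * (i:ℝ) * ((N+2).choose i : ℝ)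
      = ((N:ℝ)+2) * (-1)^(m+1) * (N.choose m : ℝ) := by
  rw [Finset.sum_range_succ']
  have h : ∀ j : ℕ, (-1:ℝ)^(j+1) * ((j:ℝ)+1) * ((N+2).choose (j+1) : ℝ)
      = (-((N:ℝ)+2)) * ((-1)^j * ((N+1).choose j : ℝ)) := by
    intro j
    have h2 : ((N:ℝ)+2) * ((N+1).choose j : ℝ) = ((N+2).choose (j+1) : ℝ) * ((j:ℝ)+1) := by
      exact_mod_cast congrArg (Nat.cast (R := ℝ)) (Nat.add_one_mul_choose_eq (N+1) j)
    linear_combination ((-1:ℝ)^j) * h2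
  simp only [Nat.cast_add, Nat.cast_one, h]
  rw [← Finset.mul_sum, lemA N m]
  push_cast
  ring

/-- `Σ_{l=0}^{2n} (-1)^{l+1} binom(2n,l) |l-n| = 2 (-1)^n binom(2(n-1),n-1)`. -/
theorem stmt_15 (n : ℕ) (hn : 1 ≤ n) :
    ∑ l ∈ Finset.range (2 * n + 1),
        (-1 : ℝ) ^ (l + 1) * (Nat.choose (2 * n) l : ℝ) * |(l : ℝ) - (n : ℝ)|
      = 2 * (-1 : ℝ) ^ n * (Nat.choose (2 * (n - 1)) (n - 1) : ℝ) := by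
  obtain ⟨k, rfl⟩ : ∃ k, n = k + 1 := ⟨n - 1, (Nat.succ_pred_eq_of_pos hn).symm⟩
  have hn1 : (k + 1) - 1 = k := by omega
  have h2n : 2 * (k + 1) = 2*k + 2 := by ring
  rw [hn1, h2n]
  set c : ℝ := (k:ℝ) + 1 with hc
  have hcast : ((k+1 : ℕ) : ℝ) = c := by push_cast; ring
  have habs : ∀ l ∈ Finset.range (2*k + 2 + 1),
      (-1:ℝ)^(l+1) * ((2*k+2).choose l : ℝ) * |(l:ℝ) - ((k+1:ℕ):ℝ)|
        = ((-1:ℝ)^(l+1) * ((2*k+2).choose l : ℝ) * ((l:ℝ) - c))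
          + 2 * ((-1:ℝ)^(l+1) * ((2*k+2).choose l : ℝ) * max (c - (l:ℝ)) 0) := by
    intro l _
    rw [hcast]
    rcases le_or_gt c (l:ℝ) with h | h
    · rw [abs_of_nonneg (by linarith), max_eq_right (by linarith)]
      ring
    · rw [abs_of_neg (by linarith), max_eq_left (by linarith)]
      ring
  rw [Finset.sum_congr rfl habs, Finset.sum_add_distrib]
  -- first (untruncated) sums vanish
  have hA2 := lemA (2*k+1) (2*k+2)
  have hB2 := lemB (2*k) (2*k+1)
  have hA2' : ∑ i ∈ Finset.range (2*k+2+1), (-1:ℝ)^i * ((2*k+2).choose i : ℝ) = 0 := by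
    rw [show 2*k+2+1 = (2*k+2)+1 from rfl]
    rw [show 2*k+2 = (2*k+1)+1 from rfl] at hA2 ⊢
    rw [hA2, Nat.choose_eq_zero_of_lt (by omega)]
    simp
  have hB2' : ∑ i ∈ Finset.range (2*k+2+1), (-1:ℝ)^i * (i:ℝ) * ((2*k+2).choose i : ℝ) = 0 := by
    rw [show 2*k+2+1 = (2*k+1)+2 from rfl, show 2*k+2 = 2*k+2 from rfl] at hB2 ⊢
    rw [show (2*k+2 : ℕ) = (2*k)+2 from rfl, hB2, Nat.choose_eq_zero_of_lt (by omega)]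
    simp
  have hS1 : ∑ l ∈ Finset.range (2*k+2+1),
      (-1:ℝ)^(l+1) * ((2*k+2).choose l : ℝ) * ((l:ℝ) - c) = 0 := by
    have heq : ∑ l ∈ Finset.range (2*k+2+1),
        (-1:ℝ)^(l+1) * ((2*k+2).choose l : ℝ) * ((l:ℝ) - c)
        = ∑ l ∈ Finset.range (2*k+2+1),
          (c * ((-1:ℝ)^l * ((2*k+2).choose l : ℝ))
            - (-1:ℝ)^l * (l:ℝ) * ((2*k+2).choose l : ℝ)) := by
      apply Finset.sum_congr rfl
      intro l _
      ring
    rw [heq, Finset.sum_sub_distrib, ← Finset.mul_sum, hA2', hB2']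
    ring
  rw [hS1, zero_add]
  -- second sum restricts to range (k+2)
  have hsub : ∑ l ∈ Finset.range (2*k+2+1),
      2 * ((-1:ℝ)^(l+1) * ((2*k+2).choose l : ℝ) * max (c - (l:ℝ)) 0)
      = ∑ l ∈ Finset.range (k+2),
      2 * ((-1:ℝ)^(l+1) * ((2*k+2).choose l : ℝ) * (c - (l:ℝ))) := by
    rw [← Finset.sum_subset (Finset.range_subset_range.mpr (by omega : k+2 ≤ 2*k+2+1))]
    · apply Finset.sum_congr rfl
      intro l hl
      have hl1 : l ≤ k+1 := by
        have := Finset.mem_range.mp hl; omega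
      have hl2 : (l:ℝ) ≤ c := by rw [hc]; exact_mod_cast hl1
      rw [max_eq_left (by linarith)]
    · intro l _ hl
      have hl1 : k+2 ≤ l := by
        have := Finset.mem_range.not.mp hl; omega
      have hl2 : c ≤ (l:ℝ) := by
        rw [hc]
        have : (k:ℝ)+1 ≤ ((k+2 : ℕ):ℝ) := by push_cast; linarith
        exact this.trans (by exact_mod_cast hl1)
      rw [max_eq_right (by linarith)]
      ring
  rw [hsub]
  -- evaluate truncated sums
  have hA1 := lemA (2*k+1) (k+1)
  have hB1 := lemB (2*k) k
  rw [show (2*k+1)+1 = 2*k+2 from rfl] at hA1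
  rw [show (2*k)+2 = 2*k+2 from rfl] at hB1
  have heq2 : ∑ l ∈ Finset.range (k+2),
      2 * ((-1:ℝ)^(l+1) * ((2*k+2).choose l : ℝ) * (c - (l:ℝ)))
      = 2 * ((-c) * (∑ i ∈ Finset.range (k+2), (-1:ℝ)^i * ((2*k+2).choose i : ℝ))
          + (∑ i ∈ Finset.range (k+2), (-1:ℝ)^i * (i:ℝ) * ((2*k+2).choose i : ℝ))) := by
    rw [Finset.mul_sum, ← Finset.sum_add_distrib, Finset.mul_sum]
    apply Finset.sum_congr rfl
    intro l _
    ring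
  rw [show k+2 = (k+1)+1 from rfl] at heq2
  rw [heq2]
  rw [show (k+1)+1 = k+2 from rfl] at hA1 ⊢
  rw [hA1, hB1]
  -- key binomial identity
  have h3 : ((k:ℝ)+1) * ((2*k+1).choose (k+1) : ℝ) = (2*(k:ℝ)+1) * ((2*k).choose k : ℝ) := by
    have := congrArg (Nat.cast (R := ℝ)) (Nat.add_one_mul_choose_eq (2*k) k)
    push_cast at this
    linarith
  rw [hc]
  push_cast
  linear_combination 2 * (-1:ℝ)^k * h3
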